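/- The Morse link numbers satisfy the recurrence L_{n+2} ≡ −4·L_n (mod 7) for all n ≥ 0 (with L_0 = L_1 = 1), and consequently L_{n+12} ≡ L_n (mod 7) for all n ≥ 0; moreover 12 is the minimal period, i.e. there is no positive integer T < 12 and N ≥ 0 with L_{n+T} ≡ L_n (mod 7) for all n ≥ N. -/
import Mathlib


/-- `wcat b n x`: `wcat b 0 x = 1` and
`wcat b (n+1) x = b x * ∑_{i+j=n} wcat b i (x+1) * wcat b j x`.
The weighted Catalan number `C_n^b` is `wcat b n 0`. -/
def wcat (b : ℕ → ℤ) : ℕ → ℕ → ℤ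
  | 0, _ => 1
  | n + 1, x => b x * ∑ i ∈ (Finset.range (n + 1)).attach,
      wcat b i.1 (x + 1) * wcat b (n - i.1) x
termination_by n _ => n
decreasing_by
  · exact Finset.mem_range.mp i.2
  · exact Nat.lt_succ_of_le (Nat.sub_le n i.1)

/-- `morseLink n` is the number `L_n` of combinatorial types of Morse links of
order `n`: the weighted Catalan number for the weight `b(x) = (2x+1)²`. -/
def morseLink (n : ℕ) : ℤ := wcat (fun x => (2 * (x : ℤ) + 1) ^ 2) n 0

instance : Fact (Nat.Prime 7) := ⟨by norm_num⟩

lemma wcat_succ (b : ℕ → ℤ) (n x : ℕ) :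
    wcat b (n + 1) x = b x * ∑ i ∈ Finset.range (n + 1), wcat b i (x + 1) * wcat b (n - i) x := by
  rw [wcat, Finset.sum_attach (Finset.range (n + 1)) (fun i => wcat b i (x + 1) * wcat b (n - i) x)]

def g (n x : ℕ) : ZMod 7 := ((wcat (fun x => (2 * (x : ℤ) + 1) ^ 2) n x : ℤ) : ZMod 7)

lemma g_zero (x : ℕ) : g 0 x = 1 := by
  simp [g, wcat]

lemma g_succ (n x : ℕ) :
    g (n + 1) x = (((2 * (x : ℤ) + 1) ^ 2 : ℤ) : ZMod 7) *
      ∑ i ∈ Finset.range (n + 1), g i (x + 1) * g (n - i) x := by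
  unfold g
  rw [wcat]
  push_cast
  rw [← Finset.sum_attach (Finset.range (n + 1))
    (fun i => ((wcat (fun x => (2 * (x : ℤ) + 1) ^ 2) i (x + 1) : ℤ) : ZMod 7) *
      ((wcat (fun x => (2 * (x : ℤ) + 1) ^ 2) (n - i) x : ℤ) : ZMod 7))]

lemma g3 (n : ℕ) : g (n + 1) 3 = 0 := by
  rw [g_succ]
  norm_num
  exact Or.inl (by decide)

lemma g2 (n : ℕ) : g n 2 = 4 ^ n := by
  induction n with
  | zero => simp [g_zero]
  | succ n ih =>
    rw [g_succ, Finset.sum_range_succ']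
    simp [g3, g_zero, ih, pow_succ]
    rw [show ((25:ZMod 7)) = 4 by decide]
    ring

lemma g11 : g 1 1 = 2 := by
  rw [g_succ]
  simp [g_zero]
  decide

lemma g2s (n : ℕ) : g (n + 1) 2 = 4 * g n 2 := by
  rw [g2, g2, pow_succ]; ring
lemma hu (n : ℕ) : g (n + 2) 1 = 6 * g (n + 1) 1 := by
  have h1 := g_succ n 1
  have h2 := g_succ (n + 1) 1
  rw [Finset.sum_range_succ'] at h2
  norm_num [g_zero] at h1 h2
  rw [show ((9:ZMod 7)) = 2 by decide] at h1 h2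
  simp only [Nat.add_sub_add_right, g2s, mul_assoc, ← Finset.mul_sum] at h2
  linear_combination h2 - 4 * h1

lemma hrec (n : ℕ) : g (n + 2) 0 = 3 * g n 0 := by
  have h1 := g_succ n 0
  have h2 := g_succ (n + 1) 0
  rw [Finset.sum_range_succ'] at h1 h2
  norm_num [g_zero] at h1 h2
  rw [Finset.sum_range_succ'] at h2
  simp only [Nat.add_sub_add_right, hu, mul_assoc, ← Finset.mul_sum] at h2
  norm_num [g11] at h2
  have h7 : (7 : ZMod 7) = 0 := by decide
  linear_combination h2 - 6 * h1 + (g (n+1) 0 - g n 0) * h7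

lemma g_one_zero : g 1 0 = 1 := by
  rw [g_succ]
  norm_num [g_zero]

lemma gkey : ∀ k : ℕ, g (2 * k) 0 = 3 ^ k ∧ g (2 * k + 1) 0 = 3 ^ k := by
  intro k
  induction k with
  | zero => simpa using ⟨g_zero 0, g_one_zero⟩
  | succ k ih =>
    constructor
    · rw [show 2 * (k + 1) = 2 * k + 2 by ring, hrec, ih.1, pow_succ]; ring
    · rw [show 2 * (k + 1) + 1 = (2 * k + 1) + 2 by ring, hrec, ih.2, pow_succ]; ring

lemma gval (n : ℕ) : g n 0 = 3 ^ (n / 2) := by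
  rcases Nat.even_or_odd n with ⟨k, hk⟩ | ⟨k, hk⟩
  · subst hk
    rw [show k + k = 2 * k by ring, (gkey k).1, Nat.mul_div_cancel_left _ (by norm_num)]
  · subst hk
    rw [(gkey k).2, show (2 * k + 1) / 2 = k by omega]

lemma mcast (n : ℕ) : ((morseLink n : ℤ) : ZMod 7) = g n 0 := rfl

lemma pow3cancel (N s : ℕ) (h : (3 : ZMod 7) ^ (N + s) = 3 ^ N) : (3 : ZMod 7) ^ s = 1 := by
  have h3 : (3 : ZMod 7) ^ N ≠ 0 := pow_ne_zero _ (by decide)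
  apply mul_left_cancel₀ h3
  rw [← pow_add, mul_one, h]

/-- `L_0 = L_1 = 1`, `L_{n+2} ≡ −4·L_n (mod 7)` for all `n`, hence
`L_{n+12} ≡ L_n (mod 7)` for all `n`, and `12` is the minimal (eventual) period
of `L_n` modulo 7. -/
theorem morseLink_mod_seven :
    morseLink 0 = 1 ∧ morseLink 1 = 1 ∧
    (∀ n : ℕ, morseLink (n + 2) ≡ -4 * morseLink n [ZMOD 7]) ∧
    (∀ n : ℕ, morseLink (n + 12) ≡ morseLink n [ZMOD 7]) ∧
    ¬ ∃ T : ℕ, 0 < T ∧ T < 12 ∧ ∃ N : ℕ, ∀ n : ℕ, N ≤ n →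
      morseLink (n + T) ≡ morseLink n [ZMOD 7] := by
  refine ⟨by simp [morseLink, wcat], ?_, ?_, ?_, ?_⟩
  · show wcat _ 1 0 = 1
    rw [wcat_succ]
    simp [wcat]
  · intro n
    refine (ZMod.intCast_eq_intCast_iff _ _ 7).mp ?_
    push_cast
    rw [mcast, mcast, hrec]
    rw [show ((-4 : ZMod 7)) = 3 by decide]
  · intro n
    refine (ZMod.intCast_eq_intCast_iff _ _ 7).mp ?_
    rw [mcast, mcast, gval, gval,
      show (n + 12) / 2 = n / 2 + 6 by omega, pow_add,
      show ((3 : ZMod 7) ^ 6) = 1 by decide, mul_one]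
  · rintro ⟨T, hT0, hT12, N, H⟩
    have key : ∀ n, N ≤ n → (3 : ZMod 7) ^ ((n + T) / 2) = 3 ^ (n / 2) := by
      intro n hn
      have := (ZMod.intCast_eq_intCast_iff _ _ 7).mpr (H n hn)
      rwa [mcast, mcast, gval, gval] at this
    rcases Nat.even_or_odd T with ⟨s, hs⟩ | ⟨s, hs⟩
    · -- T = s + s, 1 ≤ s ≤ 5
      have h := key (2 * N) (by omega)
      rw [show (2 * N + T) / 2 = N + s by omega, show (2 * N) / 2 = N by omega] at h
      have h1 := pow3cancel N s h
      have hs1 : 1 ≤ s := by omega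
      have hs2 : s ≤ 5 := by omega
      interval_cases s <;> revert h1 <;> decide
    · rcases eq_or_lt_of_le (show s ≤ 5 by omega) with h5 | h5
      · -- T = 11, use even n
        subst h5
        have h := key (2 * N) (by omega)
        rw [show (2 * N + T) / 2 = N + 5 by omega, show (2 * N) / 2 = N by omega] at h
        have h1 := pow3cancel N 5 h
        revert h1; decide
      · -- T = 2s + 1, s ≤ 4, use odd n
        have h := key (2 * N + 1) (by omega)
        rw [show (2 * N + 1 + T) / 2 = N + (s + 1) by omega,
          show (2 * N + 1) / 2 = N by omega] at h
        have h1 := pow3cancel N (s + 1) h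
        have hs4 : s ≤ 4 := by omega
        interval_cases s <;> revert h1 <;> decide
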